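/- Fix n ∈ ℕ (n ≥ 1 for the second limit) and α, β ∈ ℝ with α > −1 and β > 0. For ε > 0 set q = −e^ε, a = −e^{ε(2α+1)}, b = e^{2εβ}, and define A_n(ε) = (1−bq^{n+1})(1−abq^{n+1})/((1−abq^{2n+1})(1−abq^{2n+2})) and C_n(ε) = ab²q^{2n+1}(1−q^n)(1−aq^n)/((1−abq^{2n})(1−abq^{2n+1})). Then as ε → 0⁺ one has 1 − A_n(ε) − C_n(ε) → 0 and A_{n−1}(ε)·C_n(ε) → σ_n, where σ_{2m} = m(m+β)/((2m+α+β)(2m+α+β+1)) and σ_{2m+1} = (m+α+1)(m+α+β+1)/((2m+α+β+1)(2m+α+β+2)). -/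

import Mathlib

open Filter

/-- The recurrence coefficients `σₙ` of the monic generalized Gegenbauer polynomials. -/
noncomputable def genGegenbauerSigma (α β : ℝ) (n : ℕ) : ℝ :=
  let m : ℕ := n / 2
  if Even n then
    (m : ℝ) * ((m : ℝ) + β) / ((2 * (m : ℝ) + α + β) * (2 * (m : ℝ) + α + β + 1))
  else
    ((m : ℝ) + α + 1) * ((m : ℝ) + α + β + 1) /
      ((2 * (m : ℝ) + α + β + 1) * (2 * (m : ℝ) + α + β + 2))

open Real Topology

/-!
With `q = -e^ε`, `a = -e^{xε}`, `b = e^{yε}`, each factor `1 - aⁱ bʲ qᵏ` of `Aₙ` and `Cₙ` is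
`1 ∓ e^{cε}` with `c = i x + j y + k`, the sign being `-` exactly when `i + k` is even. A factor
`1 - e^{cε}` vanishes like `-cε` while `1 + e^{cε}` tends to `2`. Numerator and denominator of
`Aₙ` and of `Cₙ` each contain exactly one vanishing factor, so their limits are ratios of exponents
`c`, which depend only on the parity of `n`.
-/

theorem tendsto_one_sub_exp_mul_div_self (c : ℝ) :
    Tendsto (fun ε => (1 - exp (c * ε)) / ε) (𝓝[≠] 0) (𝓝 (-c)) := by
  have h : HasDerivAt (fun ε => 1 - exp (c * ε)) (-c) 0 := by
    simpa using (((hasDerivAt_id (0 : ℝ)).const_mul c).exp.const_sub 1)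
  simpa [slope_fun_def_field] using hasDerivAt_iff_tendsto_slope.mp h

theorem tendsto_one_sub_exp_mul_div_one_sub_exp_mul (c d : ℝ) (hd : d ≠ 0) :
    Tendsto (fun ε => (1 - exp (c * ε)) / (1 - exp (d * ε))) (𝓝[≠] 0) (𝓝 (c / d)) := by
  rw [← neg_div_neg_eq]
  refine ((tendsto_one_sub_exp_mul_div_self c).div (tendsto_one_sub_exp_mul_div_self d)
    (neg_ne_zero.mpr hd)).congr' ?_
  filter_upwards [self_mem_nhdsWithin] with ε hε
  exact div_div_div_cancel_right₀ hε _ _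

theorem tendsto_one_add_exp_mul_div_one_add_exp_mul (c d : ℝ) :
    Tendsto (fun ε => (1 + exp (c * ε)) / (1 + exp (d * ε))) (𝓝 0) (𝓝 1) := by
  have h (c : ℝ) : Tendsto (fun ε => 1 + exp (c * ε)) (𝓝 0) (𝓝 2) :=
    (continuous_const.add (continuous_const_mul c).rexp).tendsto' 0 2 (by norm_num)
  have h2 := (h c).div (h d) two_ne_zero
  rwa [div_self two_ne_zero] at h2

namespace LittleQJacobi

noncomputable def A (a b q : ℝ) (n : ℕ) : ℝ :=
  (1 - b * q ^ (n + 1)) * (1 - a * b * q ^ (n + 1)) /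
    ((1 - a * b * q ^ (2 * n + 1)) * (1 - a * b * q ^ (2 * n + 2)))

noncomputable def C (a b q : ℝ) (n : ℕ) : ℝ :=
  a * b ^ 2 * q ^ (2 * n + 1) * (1 - q ^ n) * (1 - a * q ^ n) /
    ((1 - a * b * q ^ (2 * n)) * (1 - a * b * q ^ (2 * n + 1)))

theorem neg_exp_pow (ε : ℝ) (k : ℕ) : (-exp ε) ^ k = (-1) ^ k * exp (k * ε) := by
  rw [neg_pow, exp_nat_mul]

theorem A_neg_exp (x y ε : ℝ) (n : ℕ) :
    A (-exp (x * ε)) (exp (y * ε)) (-exp ε) n =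
      (1 + (-1) ^ n * exp ((y + (n + 1)) * ε)) * (1 - (-1) ^ n * exp ((x + y + (n + 1)) * ε)) /
        ((1 - exp ((x + y + (2 * n + 1)) * ε)) * (1 + exp ((x + y + (2 * n + 2)) * ε))) := by
  simp only [A, neg_exp_pow]
  simp only [pow_succ (-1 : ℝ), pow_mul (-1 : ℝ)]
  push_cast
  simp only [add_mul, exp_add]
  ring

theorem C_neg_exp (x y ε : ℝ) (n : ℕ) :
    C (-exp (x * ε)) (exp (y * ε)) (-exp ε) n =
      exp ((x + y + (2 * n + 1)) * ε) * exp (y * ε) * (1 - (-1) ^ n * exp (n * ε)) *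
          (1 + (-1) ^ n * exp ((x + n) * ε)) /
        ((1 + exp ((x + y + 2 * n) * ε)) * (1 - exp ((x + y + (2 * n + 1)) * ε))) := by
  simp only [C, neg_exp_pow]
  simp only [pow_succ (-1 : ℝ), pow_mul (-1 : ℝ)]
  push_cast
  simp only [add_mul, exp_add]
  ring

noncomputable def limitA (x y : ℝ) (n : ℕ) : ℝ :=
  (if Even n then x + y + (n + 1) else y + (n + 1)) / (x + y + (2 * n + 1))

noncomputable def limitC (x y : ℝ) (n : ℕ) : ℝ :=
  (if Even n then (n : ℝ) else x + n) / (x + y + (2 * n + 1))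

theorem tendsto_A (x y : ℝ) (n : ℕ) (hD : x + y + (2 * n + 1) ≠ 0) :
    Tendsto (fun ε => A (-exp (x * ε)) (exp (y * ε)) (-exp ε) n) (𝓝[≠] 0)
      (𝓝 (limitA x y n)) := by
  simp only [A_neg_exp, limitA]
  have hsub (c : ℝ) := tendsto_one_sub_exp_mul_div_one_sub_exp_mul c _ hD
  have hadd (c : ℝ) : Tendsto (fun ε => (1 + exp (c * ε)) / (1 + exp ((x + y + (2 * n + 2)) * ε)))
      (𝓝[≠] 0) (𝓝 1) :=
    (tendsto_one_add_exp_mul_div_one_add_exp_mul _ _).mono_left nhdsWithin_le_nhds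
  rcases Nat.even_or_odd n with hn | hn
  · have h := (hadd (y + (n + 1))).mul (hsub (x + y + (n + 1)))
    rw [one_mul] at h
    rw [if_pos hn]
    refine h.congr fun ε => ?_
    simp only [hn.neg_one_pow, div_eq_mul_inv, mul_inv]
    ring
  · have h := (hsub (y + (n + 1))).mul (hadd (x + y + (n + 1)))
    rw [mul_one] at h
    rw [if_neg (Nat.not_even_iff_odd.mpr hn)]
    refine h.congr fun ε => ?_
    simp only [hn.neg_one_pow, div_eq_mul_inv, mul_inv]
    ring

theorem tendsto_C (x y : ℝ) (n : ℕ) (hD : x + y + (2 * n + 1) ≠ 0) :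
    Tendsto (fun ε => C (-exp (x * ε)) (exp (y * ε)) (-exp ε) n) (𝓝[≠] 0)
      (𝓝 (limitC x y n)) := by
  simp only [C_neg_exp, limitC]
  have hP : Tendsto (fun ε => exp ((x + y + (2 * n + 1)) * ε) * exp (y * ε)) (𝓝[≠] 0) (𝓝 1) :=
    ((continuous_const_mul _).rexp.mul (continuous_const_mul _).rexp |>.tendsto' 0 1
      (by simp)).mono_left nhdsWithin_le_nhds
  have hsub (c : ℝ) := tendsto_one_sub_exp_mul_div_one_sub_exp_mul c _ hD
  have hadd (c : ℝ) : Tendsto (fun ε => (1 + exp (c * ε)) / (1 + exp ((x + y + 2 * n) * ε)))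
      (𝓝[≠] 0) (𝓝 1) :=
    (tendsto_one_add_exp_mul_div_one_add_exp_mul _ _).mono_left nhdsWithin_le_nhds
  rcases Nat.even_or_odd n with hn | hn
  · have h := (hP.mul (hsub n)).mul (hadd (x + n))
    rw [one_mul, mul_one] at h
    rw [if_pos hn]
    refine h.congr fun ε => ?_
    simp only [hn.neg_one_pow, div_eq_mul_inv, mul_inv]
    ring
  · have h := (hP.mul (hadd n)).mul (hsub (x + n))
    rw [mul_one, one_mul] at h
    rw [if_neg (Nat.not_even_iff_odd.mpr hn)]
    refine h.congr fun ε => ?_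
    simp only [hn.neg_one_pow, div_eq_mul_inv, mul_inv]
    ring

theorem one_sub_limitA_sub_limitC (x y : ℝ) (n : ℕ) (hD : x + y + (2 * n + 1) ≠ 0) :
    1 - limitA x y n - limitC x y n = 0 := by
  rw [limitA, limitC, sub_sub, ← add_div, sub_eq_zero, eq_comm, div_eq_one_iff_eq hD]
  split_ifs <;> ring

theorem limitA_mul_limitC_succ (α β : ℝ) (h : 0 < α + β + 1) (k : ℕ) :
    limitA (2 * α + 1) (2 * β) k * limitC (2 * α + 1) (2 * β) (k + 1) =
      genGegenbauerSigma α β (k + 1) := by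
  rcases Nat.even_or_odd' k with ⟨m, rfl | rfl⟩ <;> have : (0 : ℝ) ≤ m := m.cast_nonneg
  · have hm : (2 * m + 1) / 2 = m := by omega
    simp only [limitA, limitC, genGegenbauerSigma, even_two_mul, Nat.even_add_one, hm,
      if_true, not_true_eq_false, if_false]
    push_cast
    rw [div_mul_div_comm, div_eq_div_iff (mul_pos (by linarith) (by linarith)).ne'
      (mul_pos (by linarith) (by linarith)).ne']
    ring
  · have hm : (2 * m + 1 + 1) / 2 = m + 1 := by omega
    simp only [limitA, limitC, genGegenbauerSigma, even_two_mul, Nat.even_add_one, hm,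
      if_true, not_true_eq_false, not_false_eq_true, if_false]
    push_cast
    rw [div_mul_div_comm, div_eq_div_iff (mul_pos (by linarith) (by linarith)).ne'
      (mul_pos (by linarith) (by linarith)).ne']
    ring

end LittleQJacobi

theorem littleQJacobi_to_genGegenbauer_recurrence_limit
    (n : ℕ) (α β : ℝ) (hα : α > -1) (hβ : β > 0) :
    Tendsto (fun ε : ℝ =>
        let q := -Real.exp ε;
        let a := -Real.exp (ε * (2 * α + 1));
        let b := Real.exp (2 * ε * β);
        1 - (1 - b * q ^ (n + 1)) * (1 - a * b * q ^ (n + 1)) /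
              ((1 - a * b * q ^ (2 * n + 1)) * (1 - a * b * q ^ (2 * n + 2))) -
          a * b ^ 2 * q ^ (2 * n + 1) * (1 - q ^ n) * (1 - a * q ^ n) /
            ((1 - a * b * q ^ (2 * n)) * (1 - a * b * q ^ (2 * n + 1))))
      (nhdsWithin 0 (Set.Ioi 0)) (nhds 0) ∧
    (1 ≤ n →
      Tendsto (fun ε : ℝ =>
          let q := -Real.exp ε;
          let a := -Real.exp (ε * (2 * α + 1));
          let b := Real.exp (2 * ε * β);
          ((1 - b * q ^ (n - 1 + 1)) * (1 - a * b * q ^ (n - 1 + 1)) /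
              ((1 - a * b * q ^ (2 * (n - 1) + 1)) * (1 - a * b * q ^ (2 * (n - 1) + 2)))) *
            (a * b ^ 2 * q ^ (2 * n + 1) * (1 - q ^ n) * (1 - a * q ^ n) /
              ((1 - a * b * q ^ (2 * n)) * (1 - a * b * q ^ (2 * n + 1)))))
        (nhdsWithin 0 (Set.Ioi 0)) (nhds (genGegenbauerSigma α β n))) := by
  have hD (k : ℕ) : 2 * α + 1 + 2 * β + (2 * k + 1) ≠ 0 := by
    have : (0 : ℝ) ≤ k := k.cast_nonneg
    exact ne_of_gt (by linarith)
  have ha (ε : ℝ) : Real.exp (ε * (2 * α + 1)) = Real.exp ((2 * α + 1) * ε) := by rw [mul_comm]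
  have hb (ε : ℝ) : Real.exp (2 * ε * β) = Real.exp (2 * β * ε) := by ring_nf
  have hright : 𝓝[>] (0 : ℝ) ≤ 𝓝[≠] 0 := nhdsWithin_mono _ fun ε hε => ne_of_gt hε
  refine ⟨?_, fun hn => ?_⟩
  · have h := ((tendsto_const_nhds (x := (1 : ℝ))).sub
      (LittleQJacobi.tendsto_A _ _ n (hD n))).sub (LittleQJacobi.tendsto_C _ _ n (hD n))
    rw [LittleQJacobi.one_sub_limitA_sub_limitC _ _ n (hD n)] at h
    refine (h.mono_left hright).congr fun ε => ?_
    simp only [LittleQJacobi.A, LittleQJacobi.C, ha, hb]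
  · obtain ⟨k, rfl⟩ := Nat.exists_eq_add_of_le' hn
    have h := (LittleQJacobi.tendsto_A _ _ k (hD k)).mul
      (LittleQJacobi.tendsto_C _ _ (k + 1) (hD (k + 1)))
    rw [LittleQJacobi.limitA_mul_limitC_succ α β (by linarith) k] at h
    refine (h.mono_left hright).congr fun ε => ?_
    simp only [LittleQJacobi.A, LittleQJacobi.C, ha, hb, add_tsub_cancel_right]
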